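/- For every real r > 3/2 there exists a constant C_r > 0 such that for every τ ≥ 0 and all a, b, c : ℤ² → [0,∞]: ∑_{(j,k)∈ℤ²×ℤ²} ‖j‖^{r+1/2} ‖k‖^{1/2} ‖j+k‖^{r} e^{τ‖j‖} e^{τ‖k‖} e^{τ‖j+k‖} a(j) b(k) c(j+k) ≤ C_r · S_{r+1/2,τ}(a) · S_{r,τ}(b) · S_{r,τ}(c). -/

import Mathlib

/-!
Put `A j = ‖j‖^(r+1/2) e^(τ‖j‖) a j` and `B k`, `C m` likewise with exponent `r`.
Splitting `‖k‖^(1/2) = ‖k‖^(1/2-r) ‖k‖^r`, the sum becomes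
`∑_k ‖k‖^(1/2-r) B k ∑_j A j C (j+k)`. Cauchy–Schwarz in `j` bounds the inner sum by
`‖A‖₂ ‖C‖₂` uniformly in `k`, and Cauchy–Schwarz in `k` bounds what remains by
`(∑_{k ≠ 0} ‖k‖^(1-2r))^(1/2) ‖B‖₂`; this lattice sum is finite because `2r - 1 > 2`.
The term `k = 0` needs no special treatment, since `0 ^ s = 0` for real `s ≠ 0`.
-/

open scoped ENNReal

noncomputable section

/-- Euclidean norm of a lattice point `k ∈ ℤ²` viewed as a vector in `ℝ²`. -/
def nz (k : ℤ × ℤ) : ℝ := Real.sqrt ((k.1 : ℝ) ^ 2 + (k.2 : ℝ) ^ 2)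

/-- The weighted ℓ²-norm `S_{ρ,τ}(a) = (∑_k ‖k‖^{2ρ} e^{2τ‖k‖} a(k)²)^{1/2}`. -/
def S (ρ τ : ℝ) (a : ℤ × ℤ → ℝ≥0∞) : ℝ≥0∞ :=
  (∑' k : ℤ × ℤ, ENNReal.ofReal (nz k ^ (2 * ρ) * Real.exp (2 * τ * nz k)) * (a k) ^ 2)
    ^ ((1 : ℝ) / 2)

section l2norm

variable {α : Type*}

def l2norm (f : α → ℝ≥0∞) : ℝ≥0∞ := (∑' i, f i ^ 2) ^ ((1 : ℝ) / 2)

theorem tsum_mul_le_l2norm_mul_l2norm (f g : α → ℝ≥0∞) :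
    ∑' i, f i * g i ≤ l2norm f * l2norm g := by
  rw [ENNReal.tsum_eq_iSup_sum]
  refine iSup_le fun s => ?_
  calc ∑ i ∈ s, f i * g i
      ≤ (∑ i ∈ s, f i ^ (2 : ℝ)) ^ (1 / (2 : ℝ)) * (∑ i ∈ s, g i ^ (2 : ℝ)) ^ (1 / (2 : ℝ)) :=
        ENNReal.inner_le_Lp_mul_Lq s f g .two_two
    _ ≤ l2norm f * l2norm g := by
        simp only [ENNReal.rpow_two, l2norm]
        gcongr <;> exact ENNReal.sum_le_tsum s

theorem l2norm_comp_add_right [AddGroup α] (h : α → ℝ≥0∞) (k : α) :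
    l2norm (fun j => h (j + k)) = l2norm h := by
  unfold l2norm
  congr 1
  exact (Equiv.addRight k).tsum_eq (fun m => h m ^ 2)

theorem tsum_mul_comp_add_le [AddGroup α] (f h : α → ℝ≥0∞) (k : α) :
    ∑' j, f j * h (j + k) ≤ l2norm f * l2norm h :=
  l2norm_comp_add_right h k ▸ tsum_mul_le_l2norm_mul_l2norm f _

theorem tsum_prod_mul_mul_comp_add_le [AddGroup α] (u f h : α → ℝ≥0∞) :
    ∑' p : α × α, u p.2 * (f p.1 * h (p.1 + p.2)) ≤ (∑' k, u k) * (l2norm f * l2norm h) :=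
  calc ∑' p : α × α, u p.2 * (f p.1 * h (p.1 + p.2))
      = ∑' k, u k * ∑' j, f j * h (j + k) := by
        rw [ENNReal.tsum_prod', ENNReal.tsum_comm]
        dsimp only
        exact tsum_congr fun k => ENNReal.tsum_mul_left
    _ ≤ ∑' k, u k * (l2norm f * l2norm h) := by
        gcongr with k
        exact tsum_mul_comp_add_le f h k
    _ = (∑' k, u k) * (l2norm f * l2norm h) := ENNReal.tsum_mul_right

end l2norm

theorem nz_nonneg (k : ℤ × ℤ) : 0 ≤ nz k := Real.sqrt_nonneg _

theorem norm_le_nz (k : ℤ × ℤ) : ‖k‖ ≤ nz k := by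
  rw [show ‖k‖ = max |(k.1 : ℝ)| |(k.2 : ℝ)| by simp [Prod.norm_def, Int.norm_eq_abs]]
  exact max_le (Real.abs_le_sqrt (by nlinarith)) (Real.abs_le_sqrt (by nlinarith))

theorem summable_nz_rpow {s : ℝ} (hs : s < -2) : Summable fun k : ℤ × ℤ => nz k ^ s := by
  have hsum := EisensteinSeries.summable_one_div_norm_rpow (k := -s) (by linarith)
  rw [← (finTwoArrowEquiv ℤ).symm.summable_iff] at hsum
  refine hsum.of_nonneg_of_le (fun k => Real.rpow_nonneg (nz_nonneg k) _) fun k => ?_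
  have hnorm : ‖(finTwoArrowEquiv ℤ).symm k‖ = ‖k‖ := by
    simp [EisensteinSeries.norm_eq_max_natAbs, Prod.norm_def, Int.norm_eq_abs]
  rw [Function.comp_apply, hnorm, neg_neg]
  rcases eq_or_ne k 0 with rfl | hk
  · simp [nz, Real.zero_rpow (by linarith : s ≠ 0)]
  · exact Real.rpow_le_rpow_of_nonpos (norm_pos_iff.2 hk) (norm_le_nz k) (by linarith)

theorem tsum_nz_rpow_pos {s : ℝ} (hs : s < -2) : 0 < ∑' k : ℤ × ℤ, nz k ^ s :=
  (summable_nz_rpow hs).tsum_pos (fun k => Real.rpow_nonneg (nz_nonneg k) _) (1, 0) (by simp [nz])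

theorem ofReal_rpow_sq {x : ℝ} (hx : 0 ≤ x) (ρ : ℝ) :
    ENNReal.ofReal (x ^ ρ) ^ 2 = ENNReal.ofReal (x ^ (2 * ρ)) := by
  rw [← ENNReal.ofReal_pow (Real.rpow_nonneg hx ρ), ← Real.rpow_two, ← Real.rpow_mul hx, mul_comm]

theorem ofReal_exp_sq (t : ℝ) :
    ENNReal.ofReal (Real.exp t) ^ 2 = ENNReal.ofReal (Real.exp (2 * t)) := by
  rw [← ENNReal.ofReal_pow (Real.exp_nonneg t), ← Real.exp_nat_mul]
  norm_num

theorem l2norm_ofReal_nz_rpow {s : ℝ} (hs : s < -1) :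
    l2norm (fun k => ENNReal.ofReal (nz k ^ s)) = ENNReal.ofReal √(∑' k, nz k ^ (2 * s)) := by
  simp only [l2norm, ofReal_rpow_sq (nz_nonneg _)]
  rw [← ENNReal.ofReal_tsum_of_nonneg (fun k => Real.rpow_nonneg (nz_nonneg k) _)
      (summable_nz_rpow (by linarith)),
    ENNReal.ofReal_rpow_of_nonneg (tsum_nonneg fun k => Real.rpow_nonneg (nz_nonneg k) _)
      (by norm_num), Real.sqrt_eq_rpow]

def weighted (ρ τ : ℝ) (a : ℤ × ℤ → ℝ≥0∞) (k : ℤ × ℤ) : ℝ≥0∞ :=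
  ENNReal.ofReal (nz k ^ ρ * Real.exp (τ * nz k)) * a k

theorem S_eq_l2norm_weighted (ρ τ : ℝ) (a : ℤ × ℤ → ℝ≥0∞) :
    S ρ τ a = l2norm (weighted ρ τ a) := by
  unfold S l2norm weighted
  congr 1
  refine tsum_congr fun k => ?_
  rw [mul_pow, ENNReal.ofReal_mul (Real.rpow_nonneg (nz_nonneg k) ρ), mul_pow,
    ofReal_rpow_sq (nz_nonneg k), ofReal_exp_sq,
    ← ENNReal.ofReal_mul (Real.rpow_nonneg (nz_nonneg k) _), mul_assoc]

theorem trilinear_summand_eq (r τ : ℝ) (a b c : ℤ × ℤ → ℝ≥0∞) (j k : ℤ × ℤ) :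
    ENNReal.ofReal (nz j ^ (r + 1 / 2) * nz k ^ ((1 : ℝ) / 2) * nz (j + k) ^ r
        * Real.exp (τ * nz j) * Real.exp (τ * nz k) * Real.exp (τ * nz (j + k)))
        * a j * b k * c (j + k)
      = ENNReal.ofReal (nz k ^ (1 / 2 - r)) * weighted r τ b k
        * (weighted (r + 1 / 2) τ a j * weighted r τ c (j + k)) := by
  have hsplit : nz k ^ ((1 : ℝ) / 2) = nz k ^ (1 / 2 - r) * nz k ^ r := by
    rw [← Real.rpow_add' (nz_nonneg k) (by norm_num)]
    norm_num
  rw [hsplit, ← mul_assoc]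
  simp only [weighted, ENNReal.ofReal_mul', Real.rpow_nonneg, nz_nonneg, Real.exp_nonneg]
  ring

theorem trilinear_B1_term :
    ∀ r : ℝ, 3 / 2 < r → ∃ C : ℝ, 0 < C ∧ ∀ τ : ℝ, 0 ≤ τ → ∀ a b c : ℤ × ℤ → ℝ≥0∞,
      (∑' p : (ℤ × ℤ) × (ℤ × ℤ),
          ENNReal.ofReal (nz p.1 ^ (r + 1 / 2) * nz p.2 ^ ((1 : ℝ) / 2)
              * nz (p.1 + p.2) ^ r
              * Real.exp (τ * nz p.1) * Real.exp (τ * nz p.2)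
              * Real.exp (τ * nz (p.1 + p.2)))
            * a p.1 * b p.2 * c (p.1 + p.2))
        ≤ ENNReal.ofReal C * S (r + 1 / 2) τ a * S r τ b * S r τ c := by
  intro r hr
  refine ⟨√(∑' k, nz k ^ (2 * (1 / 2 - r))), Real.sqrt_pos.2 (tsum_nz_rpow_pos (by linarith)),
    fun τ _ a b c => ?_⟩
  rw [← l2norm_ofReal_nz_rpow (by linarith)]
  simp only [S_eq_l2norm_weighted]
  calc _ = ∑' p : (ℤ × ℤ) × (ℤ × ℤ), ENNReal.ofReal (nz p.2 ^ (1 / 2 - r)) * weighted r τ b p.2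
          * (weighted (r + 1 / 2) τ a p.1 * weighted r τ c (p.1 + p.2)) :=
        tsum_congr fun p => trilinear_summand_eq r τ a b c p.1 p.2
    _ ≤ (∑' k, ENNReal.ofReal (nz k ^ (1 / 2 - r)) * weighted r τ b k)
          * (l2norm (weighted (r + 1 / 2) τ a) * l2norm (weighted r τ c)) :=
        tsum_prod_mul_mul_comp_add_le _ _ _
    _ ≤ l2norm (fun k => ENNReal.ofReal (nz k ^ (1 / 2 - r))) * l2norm (weighted r τ b)
          * (l2norm (weighted (r + 1 / 2) τ a) * l2norm (weighted r τ c)) := by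
        gcongr
        exact tsum_mul_le_l2norm_mul_l2norm _ _
    _ = _ := by ring

end
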